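/- Let a ∈ (−2,−1) and η > 0. Then the identity (1/√η)·∫₀^{+∞} (1 + ηu²)^{−2−1/a}·arctan(√η·u)·u^{1+2/a} du + (1+2a)·∫₀^{+∞} (1 + ηu²)^{−3−1/a}·u^{2+2/a} du = η^{−(3a+2)/(2a)}·( aπ/(4(1+a)) − (a√π/(4(a+1)))·Γ((3a+2)/(2a))/Γ((2a+1)/a) + (1+2a)·(√π/4)·Γ((3a+2)/(2a))/Γ((3a+1)/a) ) holds, where Γ denotes the Euler Gamma function and both integrals are absolutely convergent. -/

import Mathlib

/-!
Put `s = 1 + 1/a > 0`; the exponents become `-(s+1), 2s-1` and `-(s+2), 2s`, and the substitution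
`t = √η u` reduces both integrals to `η = 1` at the cost of a power of `η`.

The Beta integral `∫₀^∞ (1+t²)^{-(x+y)} t^{2x-1} dt = Γ(x)Γ(y)/(2Γ(x+y))` follows from Euler's
integral over `(0,1)` by the substitutions `t ↦ t/(1-t)` and `t ↦ t²`; with `x = s+1/2, y = 3/2`
it is the second integral. The first is integrated by parts against `(1+t²)^{-s} t^{2s}`, whose
derivative is `2s (1+t²)^{-(s+1)} t^{2s-1}` and which tends to `1` at infinity: the boundary term
is `π/2`, and what remains is the Beta integral with `x = s+1/2, y = 1/2`.
-/

open MeasureTheory Real Set Filter Topology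

lemma Complex.ofReal_rpow_mul_one_sub_rpow {x y t : ℝ} (ht₀ : 0 ≤ t) (ht₁ : t ≤ 1) :
    ((t ^ (x - 1) * (1 - t) ^ (y - 1) : ℝ) : ℂ) =
      (t : ℂ) ^ ((x : ℂ) - 1) * (1 - (t : ℂ)) ^ ((y : ℂ) - 1) := by
  rw [ofReal_mul, ofReal_cpow ht₀, ofReal_cpow (sub_nonneg.2 ht₁)]
  push_cast
  rfl

lemma integrableOn_Ioo_rpow_mul_one_sub_rpow {x y : ℝ} (hx : 0 < x) (hy : 0 < y) :
    IntegrableOn (fun t : ℝ => t ^ (x - 1) * (1 - t) ^ (y - 1)) (Ioo 0 1) := by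
  have h := (Complex.betaIntegral_convergent (u := x) (v := y) (by simpa) (by simpa)).1
  simpa [IntegrableOn] using ((h.mono_set Ioo_subset_Ioc_self).congr_fun
    (fun t ht => (Complex.ofReal_rpow_mul_one_sub_rpow ht.1.le ht.2.le).symm) measurableSet_Ioo).re

lemma integral_Ioo_rpow_mul_one_sub_rpow {x y : ℝ} (hx : 0 < x) (hy : 0 < y) :
    ∫ t in Ioo 0 1, t ^ (x - 1) * (1 - t) ^ (y - 1) = Gamma x * Gamma y / Gamma (x + y) := by
  have h := Complex.betaIntegral_eq_Gamma_mul_div x y (by simpa) (by simpa)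
  rw [Complex.betaIntegral, intervalIntegral.integral_of_le zero_le_one,
    integral_Ioc_eq_integral_Ioo, ← setIntegral_congr_fun measurableSet_Ioo
      fun t ht => Complex.ofReal_rpow_mul_one_sub_rpow ht.1.le ht.2.le, integral_complex_ofReal,
    ← Complex.ofReal_add, Complex.Gamma_ofReal, Complex.Gamma_ofReal, Complex.Gamma_ofReal] at h
  exact_mod_cast h

lemma image_div_one_sub_Ioo : (fun t : ℝ => t / (1 - t)) '' Ioo 0 1 = Ioi 0 := by
  ext x
  refine ⟨?_, fun hx => ⟨x / (1 + x), ?_, ?_⟩⟩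
  · rintro ⟨t, ht, rfl⟩
    exact div_pos ht.1 (sub_pos.2 ht.2)
  · have hx : 0 < x := hx
    exact ⟨by positivity, (div_lt_one (by positivity)).2 (by linarith)⟩
  · have hx : 0 < x := hx
    field_simp
    ring

lemma injOn_div_one_sub : InjOn (fun t : ℝ => t / (1 - t)) (Ioo 0 1) := by
  intro t ht t' ht' h
  have := sub_pos.2 ht.2
  have := sub_pos.2 ht'.2
  field_simp at h
  linarith

lemma hasDerivAt_div_one_sub {t : ℝ} (ht : t ≠ 1) :
    HasDerivAt (fun t : ℝ => t / (1 - t)) ((1 - t) ^ 2)⁻¹ t := by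
  refine ((hasDerivAt_id' t).div ((hasDerivAt_id' t).const_sub 1)
    (sub_ne_zero.2 ht.symm)).congr_deriv ?_
  field_simp
  ring

lemma inv_one_sub_sq_mul_one_add_div_one_sub_rpow {x y t : ℝ} (ht : t ∈ Ioo 0 1) :
    ((1 - t) ^ 2)⁻¹ * ((1 + t / (1 - t)) ^ (-(x + y)) * (t / (1 - t)) ^ (x - 1)) =
      t ^ (x - 1) * (1 - t) ^ (y - 1) := by
  have h₁ : 0 < 1 - t := sub_pos.2 ht.2
  have h₂ : 1 + t / (1 - t) = (1 - t)⁻¹ := by field_simp; ring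
  have h₃ : (1 - t) ^ (-(2 : ℝ)) * (1 - t) ^ (x + y) * (1 - t) ^ (-(x - 1)) =
      (1 - t) ^ (y - 1) := by
    rw [← rpow_add h₁, ← rpow_add h₁]
    ring_nf
  rw [h₂, inv_rpow h₁.le, rpow_neg h₁.le, inv_inv, div_rpow ht.1.le h₁.le, div_eq_mul_inv,
    ← rpow_neg h₁.le, ← rpow_two, ← rpow_neg h₁.le]
  linear_combination t ^ (x - 1) * h₃

lemma integrableOn_Ioi_one_add_rpow_mul_rpow {x y : ℝ} (hx : 0 < x) (hy : 0 < y) :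
    IntegrableOn (fun t : ℝ => (1 + t) ^ (-(x + y)) * t ^ (x - 1)) (Ioi 0) := by
  rw [← image_div_one_sub_Ioo, integrableOn_image_iff_integrableOn_abs_deriv_smul
    measurableSet_Ioo (fun t ht => (hasDerivAt_div_one_sub ht.2.ne).hasDerivWithinAt)
    injOn_div_one_sub]
  refine (integrableOn_Ioo_rpow_mul_one_sub_rpow hx hy).congr_fun (fun t ht => ?_)
    measurableSet_Ioo
  rw [abs_of_nonneg (by positivity), smul_eq_mul,
    inv_one_sub_sq_mul_one_add_div_one_sub_rpow ht]

lemma integral_Ioi_one_add_rpow_mul_rpow {x y : ℝ} (hx : 0 < x) (hy : 0 < y) :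
    ∫ t in Ioi 0, (1 + t) ^ (-(x + y)) * t ^ (x - 1) = Gamma x * Gamma y / Gamma (x + y) := by
  rw [← image_div_one_sub_Ioo, integral_image_eq_integral_abs_deriv_smul
    measurableSet_Ioo (fun t ht => (hasDerivAt_div_one_sub ht.2.ne).hasDerivWithinAt)
    injOn_div_one_sub, ← integral_Ioo_rpow_mul_one_sub_rpow hx hy]
  refine setIntegral_congr_fun measurableSet_Ioo fun t ht => ?_
  rw [abs_of_nonneg (by positivity), smul_eq_mul,
    inv_one_sub_sq_mul_one_add_div_one_sub_rpow ht]

lemma abs_two_mul_rpow_smul_comp_rpow_two {x y t : ℝ} (ht : 0 < t) :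
    (|(2 : ℝ)| * t ^ ((2 : ℝ) - 1)) • ((1 + t ^ (2 : ℝ)) ^ (-(x + y)) * (t ^ (2 : ℝ)) ^ (x - 1)) =
      2 * ((1 + t ^ 2) ^ (-(x + y)) * t ^ (2 * x - 1)) := by
  have h : t ^ ((2 : ℝ) - 1) * (t ^ (2 : ℝ)) ^ (x - 1) = t ^ (2 * x - 1) := by
    rw [← rpow_mul ht.le, ← rpow_add ht]
    ring_nf
  rw [show 1 + t ^ (2 : ℝ) = 1 + t ^ 2 by rw [rpow_two], smul_eq_mul, abs_two]
  linear_combination 2 * (1 + t ^ 2) ^ (-(x + y)) * h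

lemma integrableOn_Ioi_one_add_sq_rpow_mul_rpow {x y : ℝ} (hx : 0 < x) (hy : 0 < y) :
    IntegrableOn (fun t : ℝ => (1 + t ^ 2) ^ (-(x + y)) * t ^ (2 * x - 1)) (Ioi 0) := by
  have h := (integrableOn_Ioi_comp_rpow_iff _ two_ne_zero).2
    (integrableOn_Ioi_one_add_rpow_mul_rpow hx hy)
  refine IntegrableOn.congr_fun (h.const_mul 2⁻¹) (fun t ht => ?_) measurableSet_Ioi
  rw [abs_two_mul_rpow_smul_comp_rpow_two ht, inv_mul_cancel_left₀ two_ne_zero]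

lemma integral_Ioi_one_add_sq_rpow_mul_rpow {x y : ℝ} (hx : 0 < x) (hy : 0 < y) :
    ∫ t in Ioi 0, (1 + t ^ 2) ^ (-(x + y)) * t ^ (2 * x - 1) =
      Gamma x * Gamma y / (2 * Gamma (x + y)) := by
  have h := integral_comp_rpow_Ioi (fun t => (1 + t) ^ (-(x + y)) * t ^ (x - 1)) two_ne_zero
  rw [integral_Ioi_one_add_rpow_mul_rpow hx hy, setIntegral_congr_fun measurableSet_Ioi
    fun t ht => abs_two_mul_rpow_smul_comp_rpow_two ht, integral_const_mul] at h
  rw [mul_comm 2 (Gamma (x + y)), ← div_div, ← h]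
  ring

lemma rpow_eq_rpow_neg_mul_mul_rpow {c u : ℝ} (hc : 0 < c) (hu : 0 ≤ u) (p : ℝ) :
    u ^ p = c ^ (-p) * (c * u) ^ p := by
  rw [mul_rpow hc.le hu, ← mul_assoc, ← rpow_add hc, neg_add_cancel, rpow_zero, one_mul]

lemma IntegrableOn.comp_mul_left_mul_rpow {f : ℝ → ℝ} {p c : ℝ}
    (hf : IntegrableOn (fun t => f t * t ^ p) (Ioi 0)) (hc : 0 < c) :
    IntegrableOn (fun u => f (c * u) * u ^ p) (Ioi 0) := by
  have h := (integrableOn_Ioi_comp_mul_left_iff _ 0 hc).2 (by rwa [mul_zero])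
  refine IntegrableOn.congr_fun (h.const_mul (c ^ (-p))) (fun u hu => ?_) measurableSet_Ioi
  rw [rpow_eq_rpow_neg_mul_mul_rpow hc (le_of_lt hu) p]
  ring

lemma integral_Ioi_comp_mul_left_mul_rpow (f : ℝ → ℝ) (p : ℝ) {c : ℝ} (hc : 0 < c) :
    ∫ u in Ioi 0, f (c * u) * u ^ p = c ^ (-(p + 1)) * ∫ t in Ioi 0, f t * t ^ p := by
  have h : ∀ u ∈ Ioi (0 : ℝ), f (c * u) * u ^ p = c ^ (-p) * (f (c * u) * (c * u) ^ p) := by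
    intro u hu
    rw [rpow_eq_rpow_neg_mul_mul_rpow hc (le_of_lt hu) p]
    ring
  rw [setIntegral_congr_fun measurableSet_Ioi h, integral_const_mul,
    integral_comp_mul_left_Ioi (fun t => f t * t ^ p) 0 hc, mul_zero, smul_eq_mul, ← mul_assoc,
    neg_add, rpow_add hc, rpow_neg_one]

lemma hasDerivAt_one_add_sq_rpow_neg_mul_rpow {s t : ℝ} (ht : 0 < t) :
    HasDerivAt (fun t : ℝ => (1 + t ^ 2) ^ (-s) * t ^ (2 * s))
      (2 * s * ((1 + t ^ 2) ^ (-(s + 1)) * t ^ (2 * s - 1))) t := by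
  have h₁ : 0 < 1 + t ^ 2 := by positivity
  have hA : (1 + t ^ 2) ^ (-s) = (1 + t ^ 2) ^ (-(s + 1)) * (1 + t ^ 2) := by
    rw [← rpow_add_one h₁.ne']
    ring_nf
  have hB : t ^ (2 * s) = t ^ (2 * s - 1) * t := by
    rw [← rpow_add_one ht.ne']
    ring_nf
  refine ((((hasDerivAt_pow 2 t).const_add 1).rpow_const (Or.inl h₁.ne')).mul
    (hasDerivAt_rpow_const (Or.inl ht.ne'))).congr_deriv ?_
  rw [show -s - 1 = -(s + 1) by ring, hA, hB]
  push_cast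
  ring

lemma one_add_sq_rpow_neg_mul_rpow_eq {s t : ℝ} (ht : 0 < t) :
    (1 + t ^ 2) ^ (-s) * t ^ (2 * s) = (1 + (t ^ 2)⁻¹) ^ (-s) := by
  have h : 1 + (t ^ 2)⁻¹ = (1 + t ^ 2) * (t ^ 2)⁻¹ := by field_simp; ring
  rw [h, mul_rpow (by positivity) (by positivity), inv_rpow (by positivity),
    rpow_neg (sq_nonneg t) s, inv_inv, ← rpow_natCast t 2, ← rpow_mul ht.le]
  norm_num

lemma tendsto_one_add_sq_rpow_neg_mul_rpow_atTop (s : ℝ) :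
    Tendsto (fun t : ℝ => (1 + t ^ 2) ^ (-s) * t ^ (2 * s)) atTop (𝓝 1) := by
  have h : Tendsto (fun t : ℝ => (1 + (t ^ 2)⁻¹) ^ (-s)) atTop (𝓝 1) := by
    have := ((tendsto_pow_atTop two_ne_zero).inv_tendsto_atTop.const_add 1).rpow_const
      (p := -s) (Or.inl (by norm_num))
    simpa using this
  refine h.congr' ?_
  filter_upwards [eventually_gt_atTop 0] with t ht
  exact (one_add_sq_rpow_neg_mul_rpow_eq ht).symm

lemma continuousAt_one_add_sq_rpow_neg_mul_rpow_zero {s : ℝ} (hs : 0 ≤ s) :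
    ContinuousAt (fun t : ℝ => (1 + t ^ 2) ^ (-s) * t ^ (2 * s)) 0 :=
  (ContinuousAt.rpow_const (by fun_prop) (Or.inl (by positivity))).mul
    (continuousAt_rpow_const 0 _ (Or.inr (by positivity)))

lemma integrableOn_Ioi_one_add_sq_rpow_mul_arctan_mul_rpow {s : ℝ} (hs : 0 < s) :
    IntegrableOn (fun t : ℝ => (1 + t ^ 2) ^ (-(s + 1)) * arctan t * t ^ (2 * s - 1))
      (Ioi 0) := by
  refine IntegrableOn.congr_fun ((integrableOn_Ioi_one_add_sq_rpow_mul_rpow hs one_pos).bdd_mul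
    (c := π / 2) continuous_arctan.aestronglyMeasurable (ae_of_all _ fun t => ?_))
    (fun t _ => by ring) measurableSet_Ioi
  exact abs_le.2 ⟨(neg_pi_div_two_lt_arctan t).le, (arctan_lt_pi_div_two t).le⟩

lemma integral_Ioi_one_add_sq_rpow_mul_arctan_mul_rpow {s : ℝ} (hs : 0 < s) :
    ∫ t in Ioi 0, (1 + t ^ 2) ^ (-(s + 1)) * arctan t * t ^ (2 * s - 1) =
      π / (4 * s) - √π * Gamma (s + 1 / 2) / (4 * s * Gamma (s + 1)) := by
  set G : ℝ → ℝ := fun t => (1 + t ^ 2) ^ (-s) * t ^ (2 * s)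
  have hG0 : G 0 = 0 := by simp [G, zero_rpow (by positivity : 2 * s ≠ 0)]
  have hint := integrableOn_Ioi_one_add_sq_rpow_mul_arctan_mul_rpow hs
  -- `(1 + t²)⁻¹ G(t)` is again a Beta integrand, with parameters `s + 1/2` and `1/2`.
  have hrest : ∀ t ∈ Ioi (0 : ℝ), 1 / (1 + t ^ 2) * G t =
      (1 + t ^ 2) ^ (-((s + 1 / 2) + 1 / 2)) * t ^ (2 * (s + 1 / 2) - 1) := by
    intro t _
    rw [show -((s + 1 / 2) + 1 / 2) = -s - 1 by ring, show 2 * (s + 1 / 2) - 1 = 2 * s by ring,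
      rpow_sub_one (by positivity)]
    ring
  have hzero : Tendsto (arctan * G) (𝓝[>] 0) (𝓝 0) := by
    have h := (continuous_arctan.continuousAt.mul
      (continuousAt_one_add_sq_rpow_neg_mul_rpow_zero hs.le)).tendsto
    simpa [hG0] using h.mono_left nhdsWithin_le_nhds
  have hinfty : Tendsto (arctan * G) atTop (𝓝 (π / 2)) := by
    have h := (tendsto_arctan_atTop.mono_right nhdsWithin_le_nhds).mul
      (tendsto_one_add_sq_rpow_neg_mul_rpow_atTop s)
    rwa [mul_one] at h
  have hibp := integral_Ioi_mul_deriv_eq_deriv_mul (fun t _ => hasDerivAt_arctan t)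
    (fun t ht => hasDerivAt_one_add_sq_rpow_neg_mul_rpow ht)
    (IntegrableOn.congr_fun (hint.const_mul (2 * s)) (fun t _ => by simp only [Pi.mul_apply]; ring)
      measurableSet_Ioi)
    ((integrableOn_Ioi_one_add_sq_rpow_mul_rpow (by positivity) one_half_pos).congr_fun
      (fun t ht => (hrest t ht).symm) measurableSet_Ioi)
    hzero hinfty
  have hlhs : ∫ t in Ioi 0, arctan t * (2 * s * ((1 + t ^ 2) ^ (-(s + 1)) * t ^ (2 * s - 1))) =
      2 * s * ∫ t in Ioi 0, (1 + t ^ 2) ^ (-(s + 1)) * arctan t * t ^ (2 * s - 1) := by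
    rw [← integral_const_mul]
    congr 1 with t
    ring
  rw [hlhs, setIntegral_congr_fun measurableSet_Ioi hrest, integral_Ioi_one_add_sq_rpow_mul_rpow
    (by positivity) one_half_pos, Gamma_one_half_eq, show s + 1 / 2 + 1 / 2 = s + 1 by ring]
    at hibp
  rw [← mul_right_inj' (by positivity : 2 * s ≠ 0), hibp]
  field_simp
  ring

lemma sqrt_rpow_neg_two_mul {η : ℝ} (hη : 0 ≤ η) (x : ℝ) : √η ^ (-(2 * x - 1 + 1)) = η ^ (-x) := by
  rw [sqrt_eq_rpow, ← rpow_mul hη]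
  ring_nf

lemma one_add_mul_sq_eq_one_add_sqrt_mul_sq {η : ℝ} (hη : 0 ≤ η) (u : ℝ) :
    1 + η * u ^ 2 = 1 + (√η * u) ^ 2 := by
  rw [mul_pow, sq_sqrt hη]

lemma integrableOn_Ioi_one_add_mul_sq_rpow_mul_rpow {x y η : ℝ} (hx : 0 < x) (hy : 0 < y)
    (hη : 0 < η) :
    IntegrableOn (fun u : ℝ => (1 + η * u ^ 2) ^ (-(x + y)) * u ^ (2 * x - 1)) (Ioi 0) := by
  simp_rw [one_add_mul_sq_eq_one_add_sqrt_mul_sq hη.le]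
  exact IntegrableOn.comp_mul_left_mul_rpow (f := fun t => (1 + t ^ 2) ^ (-(x + y)))
    (integrableOn_Ioi_one_add_sq_rpow_mul_rpow hx hy) (sqrt_pos.2 hη)

lemma integral_Ioi_one_add_mul_sq_rpow_mul_rpow {x y η : ℝ} (hx : 0 < x) (hy : 0 < y)
    (hη : 0 < η) :
    ∫ u in Ioi 0, (1 + η * u ^ 2) ^ (-(x + y)) * u ^ (2 * x - 1) =
      η ^ (-x) * (Gamma x * Gamma y / (2 * Gamma (x + y))) := by
  simp_rw [one_add_mul_sq_eq_one_add_sqrt_mul_sq hη.le]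
  rw [integral_Ioi_comp_mul_left_mul_rpow (fun t => (1 + t ^ 2) ^ (-(x + y))) _ (sqrt_pos.2 hη),
    integral_Ioi_one_add_sq_rpow_mul_rpow hx hy, sqrt_rpow_neg_two_mul hη.le]

lemma integrableOn_Ioi_one_add_mul_sq_rpow_mul_arctan_mul_rpow {s η : ℝ} (hs : 0 < s)
    (hη : 0 < η) :
    IntegrableOn (fun u : ℝ => (1 + η * u ^ 2) ^ (-(s + 1)) * arctan (√η * u) * u ^ (2 * s - 1))
      (Ioi 0) := by
  simp_rw [one_add_mul_sq_eq_one_add_sqrt_mul_sq hη.le]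
  exact IntegrableOn.comp_mul_left_mul_rpow (f := fun t => (1 + t ^ 2) ^ (-(s + 1)) * arctan t)
    (integrableOn_Ioi_one_add_sq_rpow_mul_arctan_mul_rpow hs) (sqrt_pos.2 hη)

lemma integral_Ioi_one_add_mul_sq_rpow_mul_arctan_mul_rpow {s η : ℝ} (hs : 0 < s)
    (hη : 0 < η) :
    ∫ u in Ioi 0, (1 + η * u ^ 2) ^ (-(s + 1)) * arctan (√η * u) * u ^ (2 * s - 1) =
      η ^ (-s) * (π / (4 * s) - √π * Gamma (s + 1 / 2) / (4 * s * Gamma (s + 1))) := by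
  simp_rw [one_add_mul_sq_eq_one_add_sqrt_mul_sq hη.le]
  rw [integral_Ioi_comp_mul_left_mul_rpow (fun t => (1 + t ^ 2) ^ (-(s + 1)) * arctan t) _
    (sqrt_pos.2 hη), integral_Ioi_one_add_sq_rpow_mul_arctan_mul_rpow hs,
    sqrt_rpow_neg_two_mul hη.le]

lemma one_div_sqrt_mul_rpow_neg {η : ℝ} (hη : 0 < η) (s : ℝ) :
    1 / √η * η ^ (-s) = η ^ (-(s + 1 / 2)) := by
  rw [sqrt_eq_rpow, one_div, ← rpow_neg hη.le, ← rpow_add hη]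
  ring_nf

lemma Gamma_three_div_two : Gamma (3 / 2) = √π / 2 := by
  rw [show (3 / 2 : ℝ) = 1 / 2 + 1 by norm_num, Gamma_add_one one_half_pos.ne', Gamma_one_half_eq]
  ring

theorem stmt_15_general (a η : ℝ) (ha2 : a < -1) (hη : 0 < η) :
    IntegrableOn (fun u : ℝ =>
      (1 + η * u ^ 2) ^ (-2 - 1 / a) * Real.arctan (Real.sqrt η * u) * u ^ (1 + 2 / a))
      (Ioi 0) ∧
    IntegrableOn (fun u : ℝ =>
      (1 + η * u ^ 2) ^ (-3 - 1 / a) * u ^ (2 + 2 / a)) (Ioi 0) ∧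
    (1 / Real.sqrt η) *
        (∫ u in Ioi (0 : ℝ),
          (1 + η * u ^ 2) ^ (-2 - 1 / a) * Real.arctan (Real.sqrt η * u) *
            u ^ (1 + 2 / a)) +
      (1 + 2 * a) *
        (∫ u in Ioi (0 : ℝ), (1 + η * u ^ 2) ^ (-3 - 1 / a) * u ^ (2 + 2 / a)) =
      η ^ (-(3 * a + 2) / (2 * a)) *
        (a * π / (4 * (1 + a)) -
          (a * Real.sqrt π / (4 * (a + 1))) *
            (Real.Gamma ((3 * a + 2) / (2 * a)) / Real.Gamma ((2 * a + 1) / a)) +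
          (1 + 2 * a) * (Real.sqrt π / 4) *
            (Real.Gamma ((3 * a + 2) / (2 * a)) / Real.Gamma ((3 * a + 1) / a))) := by
  have ha : a ≠ 0 := (by linarith : a < 0).ne
  obtain ⟨s, hs_def⟩ : ∃ s, s = 1 + 1 / a := ⟨_, rfl⟩
  have hs : 0 < s := by
    have : -1 < 1 / a := by rw [lt_div_iff_of_neg (by linarith)]; linarith
    linarith
  rw [show -2 - 1 / a = -(s + 1) by rw [hs_def]; ring,
    show 1 + 2 / a = 2 * s - 1 by rw [hs_def]; ring,
    show -3 - 1 / a = -((s + 1 / 2) + 3 / 2) by rw [hs_def]; ring,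
    show 2 + 2 / a = 2 * (s + 1 / 2) - 1 by rw [hs_def]; ring,
    show -(3 * a + 2) / (2 * a) = -(s + 1 / 2) by rw [hs_def]; field_simp; ring,
    show (3 * a + 2) / (2 * a) = s + 1 / 2 by rw [hs_def]; field_simp; ring,
    show (2 * a + 1) / a = s + 1 by rw [hs_def]; field_simp; ring,
    show (3 * a + 1) / a = s + 1 / 2 + 3 / 2 by rw [hs_def]; field_simp; ring,
    show a * π / (4 * (1 + a)) = π / (4 * s) by rw [hs_def]; field_simp; ring,
    show a * √π / (4 * (a + 1)) = √π / (4 * s) by rw [hs_def]; field_simp]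
  refine ⟨integrableOn_Ioi_one_add_mul_sq_rpow_mul_arctan_mul_rpow hs hη,
    integrableOn_Ioi_one_add_mul_sq_rpow_mul_rpow (by positivity) (by norm_num) hη, ?_⟩
  rw [integral_Ioi_one_add_mul_sq_rpow_mul_arctan_mul_rpow hs hη,
    integral_Ioi_one_add_mul_sq_rpow_mul_rpow (by positivity) (by norm_num) hη, ← mul_assoc,
    one_div_sqrt_mul_rpow_neg hη, Gamma_three_div_two]
  field_simp
  ring

/-- for `a ∈ (−2,−1)` and `η > 0`, both integrands below are Lebesgue
integrable on `(0,+∞)` and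
`(1/√η)·∫₀^{+∞} (1+ηu²)^{−2−1/a}·arctan(√η·u)·u^{1+2/a} du
  + (1+2a)·∫₀^{+∞} (1+ηu²)^{−3−1/a}·u^{2+2/a} du
  = η^{−(3a+2)/(2a)}·( aπ/(4(1+a)) − (a√π/(4(a+1)))·Γ((3a+2)/(2a))/Γ((2a+1)/a)
      + (1+2a)·(√π/4)·Γ((3a+2)/(2a))/Γ((3a+1)/a) )`. -/
theorem stmt_15 (a η : ℝ) (ha1 : -2 < a) (ha2 : a < -1) (hη : 0 < η) :
    IntegrableOn (fun u : ℝ =>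
      (1 + η * u ^ 2) ^ (-2 - 1 / a) * Real.arctan (Real.sqrt η * u) * u ^ (1 + 2 / a))
      (Ioi 0) ∧
    IntegrableOn (fun u : ℝ =>
      (1 + η * u ^ 2) ^ (-3 - 1 / a) * u ^ (2 + 2 / a)) (Ioi 0) ∧
    (1 / Real.sqrt η) *
        (∫ u in Ioi (0 : ℝ),
          (1 + η * u ^ 2) ^ (-2 - 1 / a) * Real.arctan (Real.sqrt η * u) *
            u ^ (1 + 2 / a)) +
      (1 + 2 * a) *
        (∫ u in Ioi (0 : ℝ), (1 + η * u ^ 2) ^ (-3 - 1 / a) * u ^ (2 + 2 / a)) =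
      η ^ (-(3 * a + 2) / (2 * a)) *
        (a * π / (4 * (1 + a)) -
          (a * Real.sqrt π / (4 * (a + 1))) *
            (Real.Gamma ((3 * a + 2) / (2 * a)) / Real.Gamma ((2 * a + 1) / a)) +
          (1 + 2 * a) * (Real.sqrt π / 4) *
            (Real.Gamma ((3 * a + 2) / (2 * a)) / Real.Gamma ((3 * a + 1) / a))) :=
  stmt_15_general a η ha2 hη
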